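/- Let p be a prime, t ≥ 1 and m ≥ 1 integers, let ω be a Dirichlet character modulo p^t with values in ℂ, and let y ∈ (ZMod (p^t))ˣ. Then Σ_{χ} χ(y)⁻¹·τ(ω·χ)·τ(χ)^(m−1) = φ(p^t) · Σ_{(x₁,…,x_m) ∈ ((ZMod (p^t))ˣ)^m, x₁·x₂⋯x_m = y} ω(x₁)·e_{p^t}(x₁ + x₂ + … + x_m), where the outer sum on the left runs over ALL Dirichlet characters χ modulo p^t and φ is Euler's totient function. (This expresses the twisted hyper-Kloosterman sum KL_{ω,m+1} as a character sum of products of GL(1) Gauss sums.) -/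

import Mathlib

/-!
Expanding `τ(ωχ) τ(χ)^(m-1)` as a product of `m` sums over units gives
`∑_x ω(x₁) χ(x₁⋯x_m) e(x₁+⋯+x_m)` over `m`-tuples of units. Summing this against `χ(y)⁻¹`
over all `χ`, orthogonality of Dirichlet characters keeps exactly the tuples with product `y`,
each with weight `φ(p^t)`.
-/

open Finset

lemma AddChar.map_sum_eq_prod {A M ι : Type*} [AddCommMonoid A] [CommMonoid M]
    (ψ : AddChar A M) (s : Finset ι) (f : ι → A) : ψ (∑ i ∈ s, f i) = ∏ i ∈ s, ψ (f i) :=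
  map_prod ψ.toMonoidHom (fun i => Multiplicative.ofAdd (f i)) s

section GaussSum

variable {R R' : Type*} [CommRing R] [Fintype R] [DecidableEq R] [CommRing R']

lemma gaussSum_eq_sum_units (χ : MulChar R R') (ψ : AddChar R R') :
    gaussSum χ ψ = ∑ u : Rˣ, χ u * ψ u :=
  (Fintype.sum_of_injective _ Units.val_injective _ _
    (fun a ha => by rw [χ.map_nonunit fun h => ha ⟨h.unit, rfl⟩, zero_mul]) fun _ => rfl).symm

lemma prod_gaussSum_eq_sum_pi {ι : Type*} [Fintype ι] [DecidableEq ι] (χ : ι → MulChar R R')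
    (ψ : AddChar R R') :
    ∏ i, gaussSum (χ i) ψ = ∑ x : ι → Rˣ, (∏ i, χ i (x i)) * ψ (∑ i, (x i : R)) := by
  simp_rw [gaussSum_eq_sum_units, prod_univ_sum, Fintype.piFinset_univ, prod_mul_distrib,
    AddChar.map_sum_eq_prod]

lemma gaussSum_mul_mul_gaussSum_pow_eq_sum {m : ℕ} (i₀ : Fin m) (ω χ : MulChar R R')
    (ψ : AddChar R R') :
    gaussSum (ω * χ) ψ * gaussSum χ ψ ^ (m - 1) =
      ∑ x : Fin m → Rˣ, ω (x i₀) * χ ↑(∏ i, x i) * ψ (∑ i, (x i : R)) := by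
  calc gaussSum (ω * χ) ψ * gaussSum χ ψ ^ (m - 1)
      = ∏ i, gaussSum ((if i = i₀ then ω else 1) * χ) ψ := by
        rw [Fintype.prod_eq_mul_prod_compl i₀, if_pos rfl,
          prod_congr rfl fun i hi => by rw [if_neg (mem_compl.1 hi ∘ mem_singleton.2), one_mul],
          prod_const, card_compl, card_singleton, Fintype.card_fin]
    _ = _ := prod_gaussSum_eq_sum_pi _ ψ
    _ = _ := sum_congr rfl fun x _ => by
        simp only [MulChar.mul_apply, prod_mul_distrib, apply_ite DFunLike.coe, ite_apply,
          MulChar.one_apply_coe, prod_ite_eq', mem_univ, if_true, Units.coe_prod, map_prod]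

end GaussSum

lemma DirichletCharacter.sum_apply_inv_mul_apply_eq {K : Type*} [Field K] {n : ℕ} [NeZero n]
    [HasEnoughRootsOfUnity K (Monoid.exponent (ZMod n)ˣ)] (a b : (ZMod n)ˣ) :
    ∑ χ : DirichletCharacter K n, (χ a)⁻¹ * χ b = if b = a then (n.totient : K) else 0 := by
  simp_rw [← map_units_inv, ← ZMod.inv_coe_unit, sum_char_inv_mul_char_eq K a.isUnit,
    Units.val_inj, eq_comm]

open Finset in
theorem sum_char_twisted_gauss_eq_twisted_kloosterman_general (p : ℕ) [Fact p.Prime] (t : ℕ)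
    (m : ℕ) (hm : 1 ≤ m) (ω : DirichletCharacter ℂ (p ^ t))
    (y : (ZMod (p ^ t))ˣ) :
    ∑ χ : DirichletCharacter ℂ (p ^ t),
        (χ (y : ZMod (p ^ t)))⁻¹ * gaussSum (ω * χ) ZMod.stdAddChar *
          (gaussSum χ ZMod.stdAddChar) ^ (m - 1) =
      (Nat.totient (p ^ t) : ℂ) *
        ∑ x ∈ univ.filter (fun x : Fin m → (ZMod (p ^ t))ˣ => ∏ i, x i = y),
          ω ((x ⟨0, hm⟩ : ZMod (p ^ t))) * ZMod.stdAddChar (∑ i, (x i : ZMod (p ^ t))) := by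
  set e : AddChar (ZMod (p ^ t)) ℂ := ZMod.stdAddChar
  set i₀ : Fin m := ⟨0, hm⟩
  calc _ = ∑ χ : DirichletCharacter ℂ (p ^ t), ∑ x : Fin m → (ZMod (p ^ t))ˣ,
          (χ y)⁻¹ * χ ↑(∏ i, x i) * (ω (x i₀) * e (∑ i, (x i : ZMod (p ^ t)))) := by
        refine sum_congr rfl fun χ _ => ?_
        rw [mul_assoc, gaussSum_mul_mul_gaussSum_pow_eq_sum i₀, mul_sum]
        exact sum_congr rfl fun x _ => by ring
    _ = ∑ x : Fin m → (ZMod (p ^ t))ˣ, (if ∏ i, x i = y then ((p ^ t).totient : ℂ) else 0) *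
          (ω (x i₀) * e (∑ i, (x i : ZMod (p ^ t)))) := by
        rw [sum_comm]
        simp_rw [← sum_mul, DirichletCharacter.sum_apply_inv_mul_apply_eq]
    _ = _ := by
        rw [mul_sum, sum_filter]
        simp_rw [ite_mul, zero_mul]

open Finset in
/-- Twisted Duke–Iwaniec identity: for a Dirichlet character `ω` mod `p^t` and a unit `y`,
`∑_χ χ(y)⁻¹ τ(ωχ) τ(χ)^(m-1) = φ(p^t) · ∑_{x₁⋯x_m = y} ω(x₁) e_{p^t}(x₁+⋯+x_m)`,
the sum on the left running over all Dirichlet characters mod `p^t`. -/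
theorem sum_char_twisted_gauss_eq_twisted_kloosterman (p : ℕ) [Fact p.Prime] (t : ℕ)
    (ht : 1 ≤ t) (m : ℕ) (hm : 1 ≤ m) (ω : DirichletCharacter ℂ (p ^ t))
    (y : (ZMod (p ^ t))ˣ) :
    ∑ χ : DirichletCharacter ℂ (p ^ t),
        (χ (y : ZMod (p ^ t)))⁻¹ * gaussSum (ω * χ) ZMod.stdAddChar *
          (gaussSum χ ZMod.stdAddChar) ^ (m - 1) =
      (Nat.totient (p ^ t) : ℂ) *
        ∑ x ∈ univ.filter (fun x : Fin m → (ZMod (p ^ t))ˣ => ∏ i, x i = y),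
          ω ((x ⟨0, hm⟩ : ZMod (p ^ t))) * ZMod.stdAddChar (∑ i, (x i : ZMod (p ^ t))) :=
  sum_char_twisted_gauss_eq_twisted_kloosterman_general p t m hm ω y
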